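/- arXiv:2110.14609 — 2 statements merged into one kernel-verified Lean document; each statement's English description precedes it below -/
import Mathlib

section
/- Let A ∈ ℝ^{m×n} (not necessarily of full rank) and b ∈ ℝ^m with the system Ax = b consistent (i.e., b ∈ Im(A)). Let T = {τ_1, …, τ_d} be a (d, α, β, r, R) row covering of A. Let x_j denote the j-th iterate of the block randomized Kaczmarz method on (A, b) with blocks from T and initial iterate x_0, and set x* = (I − A†A)x_0 + A†b. Then for all j, E‖x_j − x*‖² ≤ (1 − r·σ²_{min+}(A)/(β d))^j ‖x_0 − x*‖², where σ_{min+}(A) is the smallest nonzero singular value of A. -/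
/-!
Write `e = x - x*` for the error and `P_τ = A_τ⁺ A_τ` for the orthogonal projector onto the row
space of `A_τ`. Since `A x* = b`, one Kaczmarz step maps `e` to `(I - P_τ) e`, and the error stays
in the row space of `A`. By Pythagoras, averaging over the `d` blocks gives
`‖e‖² - (1/d) ∑_τ ‖P_τ e‖²`, and
`β ∑_τ ‖P_τ e‖² ≥ ∑_τ ‖A_τ e‖² ≥ r ‖A e‖² ≥ r σ²_{min+}(A) ‖e‖²`:
the first inequality because `A_τ = A_τ P_τ` and `‖A_τ‖² ≤ β`, the second because every row lies
in at least `r` blocks, the third because `e` is orthogonal to `ker A`. So every step contracts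
the mean squared error by the factor `1 - r σ²_{min+}(A) / (β d)`.
-/

open Matrix

noncomputable section

open Classical in

/-- The Moore–Penrose pseudoinverse of a real matrix, defined via the four Penrose
conditions (which always admit a unique solution). -/
def mpinv {m n : Type*} [Fintype m] [Fintype n] (A : Matrix m n ℝ) : Matrix n m ℝ :=
  if h : ∃ B : Matrix n m ℝ,
      A * B * A = A ∧ B * A * B = B ∧ (A * B)ᵀ = A * B ∧ (B * A)ᵀ = B * A
  then h.choose else 0

/-- Smallest nonzero eigenvalue of a square real matrix. -/
def lambdaMinPos {k : Type*} [Fintype k] [DecidableEq k] (M : Matrix k k ℝ) : ℝ :=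
  sInf {μ : ℝ | μ ≠ 0 ∧ μ ∈ spectrum ℝ M}

/-- Largest eigenvalue of a square real matrix. -/
def lambdaMax {k : Type*} [Fintype k] [DecidableEq k] (M : Matrix k k ℝ) : ℝ :=
  sSup (spectrum ℝ M)

/-- Squared Euclidean norm of a vector. -/
def sqNorm {k : Type*} [Fintype k] (v : k → ℝ) : ℝ := ∑ i, (v i) ^ 2

/-- The row submatrix of `A` with rows indexed by the subset `τ`. -/
def rowSub {ι κ : Type*} (A : Matrix ι κ ℝ) (τ : Finset ι) : Matrix τ κ ℝ :=
  Matrix.of fun i j => A i.1 j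

/-- `T = (τ_1, …, τ_d)` is a `(d, a, β, r, R)` row covering of `A`:
the blocks cover all row indices, `a` lower-bounds the smallest nonzero eigenvalue and `β`
upper-bounds the largest eigenvalue of each `A_τ A_τᵀ`, and `r` (resp. `R`) is the minimum
(resp. maximum) number of blocks containing any single row. -/
structure IsRowCovering {ι κ : Type*} [Fintype ι] [DecidableEq ι] [Fintype κ] {d : ℕ}
    (A : Matrix ι κ ℝ) (τ : Fin d → Finset ι) (a β : ℝ) (r R : ℕ) : Prop where
  cover : ∀ i : ι, ∃ l, i ∈ τ l
  alpha_le : ∀ l, a ≤ lambdaMinPos (rowSub A (τ l) * (rowSub A (τ l))ᵀ)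
  le_beta : ∀ l, lambdaMax (rowSub A (τ l) * (rowSub A (τ l))ᵀ) ≤ β
  r_le : ∀ i : ι, r ≤ (Finset.univ.filter fun l => i ∈ τ l).card
  r_attained : ∃ i : ι, (Finset.univ.filter fun l => i ∈ τ l).card = r
  le_R : ∀ i : ι, (Finset.univ.filter fun l => i ∈ τ l).card ≤ R
  R_attained : ∃ i : ι, (Finset.univ.filter fun l => i ∈ τ l).card = R

/-- One step of the block Kaczmarz method with block `τ`:
`x ↦ x + A_τ† (b_τ − A_τ x)`. -/
def kaczStep {ι κ : Type*} [Fintype ι] [Fintype κ] (A : Matrix ι κ ℝ) (b : ι → ℝ)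
    (τ : Finset ι) (x : κ → ℝ) : κ → ℝ :=
  x + (mpinv (rowSub A τ)).mulVec (fun i : τ => b i.1 - (rowSub A τ).mulVec x i)

/-- The iterates of the block (randomized) Kaczmarz method, as a function of the sequence
`σ` of block choices: `x_k = x_{k-1} + A_τ† (b_τ − A_τ x_{k-1})` with `τ = τs (σ k)`. -/
def kaczIter {ι κ : Type*} [Fintype ι] [Fintype κ] {d : ℕ} (A : Matrix ι κ ℝ) (b : ι → ℝ)
    (τs : Fin d → Finset ι) (x0 : κ → ℝ) : ∀ k : ℕ, (Fin k → Fin d) → κ → ℝ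
  | 0, _ => x0
  | (k + 1), σ => kaczStep A b (τs (σ (Fin.last k))) (kaczIter A b τs x0 k (σ ∘ Fin.castSucc))


lemma sqNorm_eq_dotProduct {k : Type*} [Fintype k] (v : k → ℝ) : sqNorm v = v ⬝ᵥ v := by
  simp [sqNorm, dotProduct, sq]

lemma sqNorm_nonneg {k : Type*} [Fintype k] (v : k → ℝ) : 0 ≤ sqNorm v :=
  Finset.sum_nonneg fun i _ => sq_nonneg (v i)

lemma mulVec_dotProduct {ι κ : Type*} [Fintype ι] [Fintype κ] (M : Matrix ι κ ℝ) (x : κ → ℝ)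
    (y : ι → ℝ) : M *ᵥ x ⬝ᵥ y = x ⬝ᵥ Mᵀ *ᵥ y := by
  rw [dotProduct_comm, dotProduct_mulVec, mulVec_transpose, dotProduct_comm]

lemma sqNorm_mulVec {ι κ : Type*} [Fintype ι] [Fintype κ] (M : Matrix ι κ ℝ) (x : κ → ℝ) :
    sqNorm (M *ᵥ x) = x ⬝ᵥ (Mᵀ * M) *ᵥ x := by
  rw [sqNorm_eq_dotProduct, mulVec_dotProduct, mulVec_mulVec]

lemma transpose_mul_self_isHermitian {ι κ : Type*} [Fintype ι] (M : Matrix ι κ ℝ) :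
    (Mᵀ * M).IsHermitian := by
  simpa [conjTranspose_eq_transpose_of_trivial] using isHermitian_conjTranspose_mul_self M

lemma mul_transpose_self_posSemidef {ι κ : Type*} [Fintype ι] [Fintype κ] (M : Matrix ι κ ℝ) :
    (M * Mᵀ).PosSemidef := by
  simpa [conjTranspose_eq_transpose_of_trivial] using posSemidef_self_mul_conjTranspose M

lemma dotProduct_conj_mulVec {k : Type*} [Fintype k] (U D : Matrix k k ℝ) (x : k → ℝ) :
    x ⬝ᵥ (U * D * Uᵀ) *ᵥ x = x ᵥ* U ⬝ᵥ D *ᵥ (x ᵥ* U) := by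
  rw [← mulVec_mulVec, ← mulVec_mulVec, dotProduct_mulVec, mulVec_transpose]

section Spectral

variable {k : Type*} [Fintype k] [DecidableEq k] {S : Matrix k k ℝ}

abbrev eigenCoords (hS : S.IsHermitian) (x : k → ℝ) : k → ℝ :=
  x ᵥ* (hS.eigenvectorUnitary : Matrix k k ℝ)

lemma dotProduct_mulVec_eq_sum_eigenvalues (hS : S.IsHermitian) (x : k → ℝ) :
    x ⬝ᵥ S *ᵥ x = ∑ i, hS.eigenvalues i * eigenCoords hS x i ^ 2 := by
  have hS' : S = (hS.eigenvectorUnitary : Matrix k k ℝ) * diagonal hS.eigenvalues *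
      (hS.eigenvectorUnitary : Matrix k k ℝ)ᵀ := by
    conv_lhs => rw [hS.spectral_theorem, Unitary.conjStarAlgAut_apply]
    simp [star_eq_conjTranspose, RCLike.ofReal_real_eq_id]
  conv_lhs => rw [hS', dotProduct_conj_mulVec]
  simp only [dotProduct, mulVec_diagonal]
  exact Finset.sum_congr rfl fun i _ => by ring

lemma dotProduct_self_eq_sum_eigenCoords (hS : S.IsHermitian) (x : k → ℝ) :
    x ⬝ᵥ x = ∑ i, eigenCoords hS x i ^ 2 := by
  have hU : (hS.eigenvectorUnitary : Matrix k k ℝ) * 1 * (hS.eigenvectorUnitary : Matrix k k ℝ)ᵀ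
      = 1 := by
    simpa [star_eq_conjTranspose] using Unitary.coe_mul_star_self hS.eigenvectorUnitary
  have h := dotProduct_conj_mulVec (hS.eigenvectorUnitary : Matrix k k ℝ) 1 x
  rw [hU, one_mulVec, one_mulVec] at h
  rw [h]
  simp [dotProduct, sq]

lemma eigenvalues_le_lambdaMax (hS : S.IsHermitian) (i : k) : hS.eigenvalues i ≤ lambdaMax S :=
  le_csSup (hS.spectrum_real_eq_range_eigenvalues ▸ (Set.finite_range _).bddAbove)
    (hS.eigenvalues_mem_spectrum_real i)

lemma lambdaMinPos_le_eigenvalues (hS : S.IsHermitian) {i : k} (hi : hS.eigenvalues i ≠ 0) :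
    lambdaMinPos S ≤ hS.eigenvalues i :=
  csInf_le ((hS.spectrum_real_eq_range_eigenvalues ▸ (Set.finite_range _).bddBelow).mono
    fun _ hμ => hμ.2) ⟨hi, hS.eigenvalues_mem_spectrum_real i⟩

lemma lambdaMax_nonneg (hS : S.PosSemidef) : 0 ≤ lambdaMax S := by
  refine Real.sSup_nonneg fun μ hμ => ?_
  obtain ⟨i, rfl⟩ := hS.isHermitian.spectrum_real_eq_range_eigenvalues ▸ hμ
  exact hS.eigenvalues_nonneg i

lemma dotProduct_mulVec_le_lambdaMax (hS : S.IsHermitian) (x : k → ℝ) :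
    x ⬝ᵥ S *ᵥ x ≤ lambdaMax S * (x ⬝ᵥ x) := by
  rw [dotProduct_mulVec_eq_sum_eigenvalues hS, dotProduct_self_eq_sum_eigenCoords hS,
    Finset.mul_sum]
  exact Finset.sum_le_sum fun i _ =>
    mul_le_mul_of_nonneg_right (eigenvalues_le_lambdaMax hS i) (sq_nonneg _)

/-- On vectors orthogonal to the kernel, only the nonzero eigenvalues contribute. -/
lemma lambdaMinPos_mul_le_dotProduct_mulVec (hS : S.IsHermitian) {x : k → ℝ}
    (hx : ∀ v, S *ᵥ v = 0 → x ⬝ᵥ v = 0) : lambdaMinPos S * (x ⬝ᵥ x) ≤ x ⬝ᵥ S *ᵥ x := by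
  rw [dotProduct_mulVec_eq_sum_eigenvalues hS, dotProduct_self_eq_sum_eigenCoords hS,
    Finset.mul_sum]
  refine Finset.sum_le_sum fun i _ => ?_
  by_cases hi : hS.eigenvalues i = 0
  · have hker : S *ᵥ ⇑(hS.eigenvectorBasis i) = 0 := by
      rw [hS.mulVec_eigenvectorBasis, hi, zero_smul]
    have hcoord : eigenCoords hS x i = 0 := hx _ hker
    simp [hcoord]
  · exact mul_le_mul_of_nonneg_right (lambdaMinPos_le_eigenvalues hS hi) (sq_nonneg _)

end Spectral

/-- The witness is `(AᵀA)⁺ Aᵀ`, where `(AᵀA)⁺ = cfc (·⁻¹) (AᵀA)` inverts exactly the nonzero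
eigenvalues because `0⁻¹ = 0` in `ℝ`. -/
lemma exists_penrose {ι κ : Type*} [Fintype ι] [Fintype κ] (A : Matrix ι κ ℝ) :
    ∃ B : Matrix κ ι ℝ,
      A * B * A = A ∧ B * A * B = B ∧ (A * B)ᵀ = A * B ∧ (B * A)ᵀ = B * A := by
  classical
  set S := Aᵀ * A
  have hS : IsSelfAdjoint S := transpose_mul_self_isHermitian A
  have hfin : (spectrum ℝ S).Finite :=
    hS.isHermitian.spectrum_real_eq_range_eigenvalues ▸ Set.finite_range _
  have hmul (f g : ℝ → ℝ) : cfc f S * cfc g S = cfc (fun x => f x * g x) S :=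
    (cfc_mul f g S (hfin.continuousOn _) (hfin.continuousOn _)).symm
  set T := cfc (·⁻¹ : ℝ → ℝ) S
  have hT : Tᵀ = T := by
    simpa [IsSelfAdjoint, star_eq_conjTranspose] using cfc_predicate (·⁻¹ : ℝ → ℝ) S
  have hTS : (T * S)ᵀ = T * S := by
    rw [transpose_mul, hT, transpose_mul, transpose_transpose]
    simpa only [cfc_id' ℝ S] using (cfc_commute_cfc (fun x => x) (·⁻¹ : ℝ → ℝ) S).eq
  have hSTS : S * T * S = S := by
    calc S * T * S = cfc (fun x => x) S * T * cfc (fun x => x) S := by rw [cfc_id' ℝ S]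
      _ = cfc (fun x => x * x⁻¹ * x) S := by rw [hmul, hmul]
      _ = S := by simp only [mul_inv_mul_cancel, cfc_id' ℝ S]
  have hTST : T * S * T = T := by
    calc T * S * T = T * cfc (fun x => x) S * T := by rw [cfc_id' ℝ S]
      _ = cfc (fun x => x⁻¹ * x * x⁻¹) S := by rw [hmul, hmul]
      _ = T := by simpa using congrArg (cfc · S) (funext fun x : ℝ => mul_inv_mul_cancel x⁻¹)
  have hATS : A * (T * S) = A := by
    have hS1 : S * (1 - T * S) = 0 := by rw [mul_sub, mul_one, ← mul_assoc, hSTS, sub_self]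
    have h : (A * (1 - T * S))ᴴ * (A * (1 - T * S)) = 0 := by
      rw [conjTranspose_eq_transpose_of_trivial, transpose_mul, transpose_sub, transpose_one, hTS,
        Matrix.mul_assoc, ← Matrix.mul_assoc Aᵀ]
      change _ * (S * _) = 0
      rw [hS1, Matrix.mul_zero]
    rwa [conjTranspose_mul_self_eq_zero, Matrix.mul_sub, Matrix.mul_one, sub_eq_zero,
      eq_comm] at h
  refine ⟨T * Aᵀ, ?_, ?_, ?_, ?_⟩
  · rwa [Matrix.mul_assoc, Matrix.mul_assoc]
  · calc T * Aᵀ * A * (T * Aᵀ) = T * S * T * Aᵀ := by simp only [S, Matrix.mul_assoc]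
      _ = T * Aᵀ := by rw [hTST]
  · rw [transpose_mul, transpose_mul, transpose_transpose, hT, Matrix.mul_assoc]
  · rwa [Matrix.mul_assoc]

section MoorePenrose

variable {ι κ : Type*} [Fintype ι] [Fintype κ] (A : Matrix ι κ ℝ)

lemma mpinv_spec :
    A * mpinv A * A = A ∧ mpinv A * A * mpinv A = mpinv A ∧
      (A * mpinv A)ᵀ = A * mpinv A ∧ (mpinv A * A)ᵀ = mpinv A * A := by
  rw [mpinv, dif_pos (exists_penrose A)]
  exact (exists_penrose A).choose_spec

def rowSpaceProj : Matrix κ κ ℝ := mpinv A * A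

lemma transpose_rowSpaceProj : (rowSpaceProj A)ᵀ = rowSpaceProj A := (mpinv_spec A).2.2.2

lemma mul_rowSpaceProj : A * rowSpaceProj A = A := by
  rw [rowSpaceProj, ← Matrix.mul_assoc, (mpinv_spec A).1]

lemma rowSpaceProj_mul_mpinv : rowSpaceProj A * mpinv A = mpinv A := (mpinv_spec A).2.1

lemma rowSpaceProj_mul_self : rowSpaceProj A * rowSpaceProj A = rowSpaceProj A := by
  rw [rowSpaceProj, ← Matrix.mul_assoc, (mpinv_spec A).2.1]

lemma mulVec_mpinv_mulVec_mulVec (x : κ → ℝ) : A *ᵥ (mpinv A *ᵥ (A *ᵥ x)) = A *ᵥ x := by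
  rw [mulVec_mulVec, mulVec_mulVec, (mpinv_spec A).1]

lemma sqNorm_sub_rowSpaceProj_mulVec (e : κ → ℝ) :
    sqNorm (e - rowSpaceProj A *ᵥ e) = sqNorm e - sqNorm (rowSpaceProj A *ᵥ e) := by
  have hP : rowSpaceProj A *ᵥ e ⬝ᵥ rowSpaceProj A *ᵥ e = e ⬝ᵥ rowSpaceProj A *ᵥ e := by
    rw [mulVec_dotProduct, transpose_rowSpaceProj, mulVec_mulVec, rowSpaceProj_mul_self]
  simp only [sqNorm_eq_dotProduct, sub_dotProduct, dotProduct_sub, dotProduct_comm _ e, hP]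
  ring

lemma dotProduct_eq_zero_of_rowSpaceProj_mulVec {e v : κ → ℝ} (he : rowSpaceProj A *ᵥ e = e)
    (hv : (Aᵀ * A) *ᵥ v = 0) : e ⬝ᵥ v = 0 := by
  have hAv : A *ᵥ v = 0 := by
    rw [← dotProduct_self_eq_zero, ← sqNorm_eq_dotProduct, sqNorm_mulVec, hv, dotProduct_zero]
  rw [← he, mulVec_dotProduct, transpose_rowSpaceProj, rowSpaceProj, ← mulVec_mulVec, hAv,
    mulVec_zero, dotProduct_zero]

end MoorePenrose

lemma sqNorm_mulVec_le_lambdaMax {ι κ : Type*} [Fintype ι] [DecidableEq ι] [Fintype κ]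
    (M : Matrix ι κ ℝ) (x : κ → ℝ) : sqNorm (M *ᵥ x) ≤ lambdaMax (M * Mᵀ) * sqNorm x := by
  set z := M *ᵥ x
  have hmax : 0 ≤ lambdaMax (M * Mᵀ) := lambdaMax_nonneg (mul_transpose_self_posSemidef M)
  have hz : sqNorm z = x ⬝ᵥ Mᵀ *ᵥ z := by rw [sqNorm_eq_dotProduct, mulVec_dotProduct]
  have hw : sqNorm (Mᵀ *ᵥ z) ≤ lambdaMax (M * Mᵀ) * sqNorm z := by
    rw [sqNorm_mulVec, transpose_transpose, sqNorm_eq_dotProduct z]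
    exact dotProduct_mulVec_le_lambdaMax (mul_transpose_self_posSemidef M).isHermitian z
  have hcs : (x ⬝ᵥ Mᵀ *ᵥ z) ^ 2 ≤ sqNorm x * sqNorm (Mᵀ *ᵥ z) := by
    simpa [sqNorm, dotProduct] using Finset.sum_mul_sq_le_sq_mul_sq Finset.univ x (Mᵀ *ᵥ z)
  rw [← hz] at hcs
  nlinarith [sqNorm_nonneg x, sqNorm_nonneg z, mul_nonneg hmax (sqNorm_nonneg x)]

lemma mul_sum_le_sum_sum_of_le_card {ι α : Type*} [Fintype ι] [DecidableEq ι] [Fintype α]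
    {r : ℕ} (τ : α → Finset ι) (hr : ∀ i, r ≤ (Finset.univ.filter fun l => i ∈ τ l).card)
    {f : ι → ℝ} (hf : ∀ i, 0 ≤ f i) : (r : ℝ) * ∑ i, f i ≤ ∑ l, ∑ i ∈ τ l, f i := by
  rw [Finset.sum_comm' (s' := fun i => Finset.univ.filter fun l => i ∈ τ l) (t' := Finset.univ)
    (by simp), Finset.mul_sum]
  refine Finset.sum_le_sum fun i _ => ?_
  rw [Finset.sum_const, nsmul_eq_mul]
  exact mul_le_mul_of_nonneg_right (by exact_mod_cast hr i) (hf i)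

lemma rowSub_mul {ι κ κ' : Type*} [Fintype κ] (A : Matrix ι κ ℝ) (τ : Finset ι)
    (M : Matrix κ κ' ℝ) : rowSub A τ * M = rowSub (A * M) τ := by
  ext i j
  simp [rowSub, mul_apply]

lemma sqNorm_rowSub_mulVec {ι κ : Type*} [Fintype κ] (A : Matrix ι κ ℝ) (τ : Finset ι)
    (x : κ → ℝ) : sqNorm (rowSub A τ *ᵥ x) = ∑ i ∈ τ, (A *ᵥ x) i ^ 2 :=
  Finset.sum_coe_sort τ fun i => (A *ᵥ x) i ^ 2

/-- Unlike `le_geom`, no sign condition on `c`: for `c < 0` the sequence vanishes. -/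
lemma le_pow_mul_of_succ_le_mul {u : ℕ → ℝ} {c : ℝ} (hu : ∀ j, 0 ≤ u j)
    (h : ∀ j, u (j + 1) ≤ c * u j) (j : ℕ) : u j ≤ c ^ j * u 0 := by
  rcases le_or_gt 0 c with hc | hc
  · exact le_geom hc j fun k _ => h k
  · have h0 : u 0 = 0 := by nlinarith [hu 0, hu 1, h 0]
    cases j with
    | zero => simp
    | succ j =>
      rw [h0, mul_zero]
      nlinarith [hu j, h j]

def meanSqErr {ι κ : Type*} [Fintype ι] [Fintype κ] {d : ℕ} (A : Matrix ι κ ℝ) (b : ι → ℝ)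
    (τs : Fin d → Finset ι) (x0 xstar : κ → ℝ) (j : ℕ) : ℝ :=
  (∑ σ : Fin j → Fin d, sqNorm (kaczIter A b τs x0 j σ - xstar)) / (d : ℝ) ^ j

section Kaczmarz

variable {ι κ : Type*} [Fintype ι] [Fintype κ] {A : Matrix ι κ ℝ}

lemma rowSpaceProj_mul_rowSpaceProj_rowSub (τ : Finset ι) :
    rowSpaceProj A * rowSpaceProj (rowSub A τ) = rowSpaceProj (rowSub A τ) := by
  have h : rowSpaceProj (rowSub A τ) * rowSpaceProj A = rowSpaceProj (rowSub A τ) := by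
    rw [rowSpaceProj, Matrix.mul_assoc, rowSub_mul, mul_rowSpaceProj]
  simpa only [transpose_mul, transpose_rowSpaceProj] using congrArg transpose h

lemma sqNorm_mulVec_le_lambdaMax_mul_sqNorm_rowSpaceProj [DecidableEq ι] (x : κ → ℝ) :
    sqNorm (A *ᵥ x) ≤ lambdaMax (A * Aᵀ) * sqNorm (rowSpaceProj A *ᵥ x) := by
  rw [← mul_rowSpaceProj A, ← mulVec_mulVec, mul_rowSpaceProj]
  exact sqNorm_mulVec_le_lambdaMax A _

lemma lambdaMinPos_mul_sqNorm_le [DecidableEq κ] {e : κ → ℝ} (he : rowSpaceProj A *ᵥ e = e) :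
    lambdaMinPos (Aᵀ * A) * sqNorm e ≤ sqNorm (A *ᵥ e) := by
  rw [sqNorm_mulVec, sqNorm_eq_dotProduct]
  exact lambdaMinPos_mul_le_dotProduct_mulVec (transpose_mul_self_isHermitian A)
    fun v hv => dotProduct_eq_zero_of_rowSpaceProj_mulVec A he hv

lemma mul_lambdaMinPos_mul_sqNorm_le [DecidableEq ι] [DecidableEq κ] {α : Type*} [Fintype α]
    {τs : α → Finset ι} {β : ℝ} {r : ℕ}
    (hβ : ∀ l, lambdaMax (rowSub A (τs l) * (rowSub A (τs l))ᵀ) ≤ β)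
    (hr : ∀ i, r ≤ (Finset.univ.filter fun l => i ∈ τs l).card) {e : κ → ℝ}
    (he : rowSpaceProj A *ᵥ e = e) :
    r * lambdaMinPos (Aᵀ * A) * sqNorm e ≤
      β * ∑ l, sqNorm (rowSpaceProj (rowSub A (τs l)) *ᵥ e) := by
  calc r * lambdaMinPos (Aᵀ * A) * sqNorm e
      ≤ r * sqNorm (A *ᵥ e) := by
        rw [mul_assoc]
        exact mul_le_mul_of_nonneg_left (lambdaMinPos_mul_sqNorm_le he) r.cast_nonneg
    _ ≤ ∑ l, sqNorm (rowSub A (τs l) *ᵥ e) := by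
        simp only [sqNorm_rowSub_mulVec]
        exact mul_sum_le_sum_sum_of_le_card τs hr fun i => sq_nonneg ((A *ᵥ e) i)
    _ ≤ ∑ l, β * sqNorm (rowSpaceProj (rowSub A (τs l)) *ᵥ e) := by
        refine Finset.sum_le_sum fun l _ => ?_
        exact (sqNorm_mulVec_le_lambdaMax_mul_sqNorm_rowSpaceProj e).trans
          (mul_le_mul_of_nonneg_right (hβ l) (sqNorm_nonneg _))
    _ = β * ∑ l, sqNorm (rowSpaceProj (rowSub A (τs l)) *ᵥ e) := (Finset.mul_sum ..).symm

lemma sum_sqNorm_sub_rowSpaceProj_div_le [DecidableEq ι] [DecidableEq κ] {d : ℕ}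
    {τs : Fin d → Finset ι} {β : ℝ} {r : ℕ}
    (hβ : ∀ l, lambdaMax (rowSub A (τs l) * (rowSub A (τs l))ᵀ) ≤ β)
    (hr : ∀ i, r ≤ (Finset.univ.filter fun l => i ∈ τs l).card) {e : κ → ℝ}
    (he : rowSpaceProj A *ᵥ e = e) :
    (∑ l, sqNorm (e - rowSpaceProj (rowSub A (τs l)) *ᵥ e)) / d ≤
      (1 - r * lambdaMinPos (Aᵀ * A) / (β * d)) * sqNorm e := by
  rcases Nat.eq_zero_or_pos d with rfl | hd
  · simp [sqNorm_nonneg]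
  have hβ0 : 0 ≤ β := (lambdaMax_nonneg (mul_transpose_self_posSemidef _)).trans (hβ ⟨0, hd⟩)
  have hd' : (0 : ℝ) < d := Nat.cast_pos.mpr hd
  have hproj : r * lambdaMinPos (Aᵀ * A) * sqNorm e / β ≤
      ∑ l, sqNorm (rowSpaceProj (rowSub A (τs l)) *ᵥ e) :=
    div_le_of_le_mul₀ hβ0 (Finset.sum_nonneg fun l _ => sqNorm_nonneg _)
      ((mul_lambdaMinPos_mul_sqNorm_le hβ hr he).trans_eq (mul_comm _ _))
  simp only [sqNorm_sub_rowSpaceProj_mulVec, Finset.sum_sub_distrib, Finset.sum_const,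
    Finset.card_univ, Fintype.card_fin, nsmul_eq_mul]
  rw [div_le_iff₀ hd']
  have hrhs : (1 - r * lambdaMinPos (Aᵀ * A) / (β * d)) * sqNorm e * d =
      d * sqNorm e - r * lambdaMinPos (Aᵀ * A) * sqNorm e / β := by
    field_simp
  linarith

variable {b : ι → ℝ} {xstar : κ → ℝ}

lemma kaczStep_sub (hb : A *ᵥ xstar = b) (τ : Finset ι) (x : κ → ℝ) :
    kaczStep A b τ x - xstar = (x - xstar) - rowSpaceProj (rowSub A τ) *ᵥ (x - xstar) := by
  have hres : (fun i : τ => b i - (rowSub A τ *ᵥ x) i) = -(rowSub A τ *ᵥ (x - xstar)) := by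
    ext i
    simp [← hb, mulVec_sub, rowSub, mulVec]
  rw [kaczStep, hres, mulVec_neg, rowSpaceProj, ← mulVec_mulVec]
  abel

lemma rowSpaceProj_mulVec_kaczIter_sub {d : ℕ} (hb : A *ᵥ xstar = b) (τs : Fin d → Finset ι)
    {x0 : κ → ℝ} (h0 : rowSpaceProj A *ᵥ (x0 - xstar) = x0 - xstar) :
    ∀ j σ, rowSpaceProj A *ᵥ (kaczIter A b τs x0 j σ - xstar) = kaczIter A b τs x0 j σ - xstar
  | 0, _ => h0
  | j + 1, σ => by
    rw [kaczIter, kaczStep_sub hb, mulVec_sub, rowSpaceProj_mulVec_kaczIter_sub hb τs h0 j,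
      mulVec_mulVec, rowSpaceProj_mul_rowSpaceProj_rowSub]

lemma sum_kaczIter_succ {d : ℕ} (τs : Fin d → Finset ι) (x0 : κ → ℝ) (j : ℕ)
    (F : (κ → ℝ) → ℝ) :
    ∑ σ : Fin (j + 1) → Fin d, F (kaczIter A b τs x0 (j + 1) σ) =
      ∑ σ : Fin j → Fin d, ∑ l, F (kaczStep A b (τs l) (kaczIter A b τs x0 j σ)) := by
  rw [← (Fin.snocEquiv fun _ => Fin d).sum_comp, Fintype.sum_prod_type, Finset.sum_comm]
  simp [kaczIter, Fin.snocEquiv_apply, Function.comp_def]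

lemma meanSqErr_zero {d : ℕ} (τs : Fin d → Finset ι) (x0 : κ → ℝ) :
    meanSqErr A b τs x0 xstar 0 = sqNorm (x0 - xstar) := by
  simp [meanSqErr, kaczIter]

lemma meanSqErr_nonneg {d : ℕ} (τs : Fin d → Finset ι) (x0 : κ → ℝ) (j : ℕ) :
    0 ≤ meanSqErr A b τs x0 xstar j :=
  div_nonneg (Finset.sum_nonneg fun σ _ => sqNorm_nonneg _) (by positivity)

lemma meanSqErr_succ_le [DecidableEq ι] [DecidableEq κ] {d : ℕ} {τs : Fin d → Finset ι} {β : ℝ}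
    {r : ℕ} (hb : A *ᵥ xstar = b)
    (hβ : ∀ l, lambdaMax (rowSub A (τs l) * (rowSub A (τs l))ᵀ) ≤ β)
    (hr : ∀ i, r ≤ (Finset.univ.filter fun l => i ∈ τs l).card) {x0 : κ → ℝ}
    (h0 : rowSpaceProj A *ᵥ (x0 - xstar) = x0 - xstar) (j : ℕ) :
    meanSqErr A b τs x0 xstar (j + 1) ≤
      (1 - r * lambdaMinPos (Aᵀ * A) / (β * d)) * meanSqErr A b τs x0 xstar j := by
  rw [meanSqErr, meanSqErr, sum_kaczIter_succ τs x0 j (fun x => sqNorm (x - xstar)), pow_succ',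
    ← div_div, Finset.sum_div, ← mul_div_assoc, Finset.mul_sum]
  gcongr with σ
  simp only [kaczStep_sub hb]
  exact sum_sqNorm_sub_rowSpaceProj_div_le hβ hr (rowSpaceProj_mulVec_kaczIter_sub hb τs h0 j σ)

end Kaczmarz

/-- **Theorem (convergence of block randomized Kaczmarz, consistent case).**
If `Ax = b` is consistent and `T` is a `(d, α, β, r, R)` row covering of `A`, then with
`x* = (I − A†A) x_0 + A†b`, the expected squared error of the `j`-th block randomized
Kaczmarz iterate (expectation = average over all uniform i.i.d. block choice sequences)
satisfies `E‖x_j − x*‖² ≤ (1 − r σ²₊(A)/(β d))ʲ ‖x_0 − x*‖²`,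
where `σ²₊(A) = λ₊(AᵀA)` is the square of the smallest nonzero singular value. -/
theorem block_randomized_kaczmarz_convergence_consistent {m n d : ℕ}
    (A : Matrix (Fin m) (Fin n) ℝ) (b : Fin m → ℝ)
    (hconsistent : ∃ x : Fin n → ℝ, A.mulVec x = b)
    (α β : ℝ) (r R : ℕ) (τs : Fin d → Finset (Fin m))
    (hcov : IsRowCovering A τs α β r R)
    (x0 xstar : Fin n → ℝ)
    (hxstar : xstar = (x0 - (mpinv A).mulVec (A.mulVec x0)) + (mpinv A).mulVec b) :
    ∀ j : ℕ,
      (∑ σ : Fin j → Fin d, sqNorm (kaczIter A b τs x0 j σ - xstar)) / (d : ℝ) ^ j ≤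
        (1 - (r : ℝ) * lambdaMinPos (Aᵀ * A) / (β * d)) ^ j * sqNorm (x0 - xstar) := by
  obtain ⟨x, rfl⟩ := hconsistent
  have hb : A *ᵥ xstar = A *ᵥ x := by
    rw [hxstar, mulVec_add, mulVec_sub, mulVec_mpinv_mulVec_mulVec, mulVec_mpinv_mulVec_mulVec,
      sub_self, zero_add]
  have h0 : rowSpaceProj A *ᵥ (x0 - xstar) = x0 - xstar := by
    have he0 : x0 - xstar = mpinv A *ᵥ (A *ᵥ x0 - A *ᵥ x) := by
      rw [hxstar, mulVec_sub]
      abel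
    rw [he0, mulVec_mulVec, rowSpaceProj_mul_mpinv]
  intro j
  have h := le_pow_mul_of_succ_le_mul (meanSqErr_nonneg τs x0)
    (meanSqErr_succ_le hb hcov.le_beta hcov.r_le h0) j
  rwa [meanSqErr_zero] at h

end
end

section
/- Let A ∈ ℝ^{m×n}, b ∈ ℝ^m, e = A x_e − b for some x_e ∈ ℝ^n, and x* = (I − A†A)x_0 + A†(b + e). Let (x_j) be any sequence with x_{j+1} = x_j + A_{τ_j}†(b_{τ_j} − A_{τ_j} x_j) for some subsets τ_j ⊆ [m] of the row indices. Then for all j, x_j − x* lies in the row space Im(A^T) of A. -/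
open Matrix

noncomputable section

lemma mpinv_mulVec_mem_range {m' n' : Type*} [Fintype m'] [Fintype n']
    (A : Matrix m' n' ℝ) (v : m' → ℝ) :
    (mpinv A).mulVec v ∈ LinearMap.range (Matrix.mulVecLin Aᵀ) := by
  classical
  unfold mpinv
  split
  · rename_i h
    obtain ⟨h1, h2, h3, h4⟩ := h.choose_spec
    set B := h.choose with hB
    have hBeq : B = Aᵀ * (Bᵀ * B) := by
      calc B = B * A * B := h2.symm
        _ = (B * A)ᵀ * B := by rw [h4]
        _ = Aᵀ * Bᵀ * B := by rw [Matrix.transpose_mul]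
        _ = Aᵀ * (Bᵀ * B) := by rw [Matrix.mul_assoc]
    refine ⟨(Bᵀ * B).mulVec v, ?_⟩
    rw [Matrix.mulVecLin_apply, Matrix.mulVec_mulVec, ← hBeq]
  · exact ⟨0, by simp⟩

lemma rowSub_transpose_range_subset {m' : ℕ} {n' : Type*} [Fintype n']
    (A : Matrix (Fin m') n' ℝ) (τ : Finset (Fin m')) (w : τ → ℝ) :
    (rowSub A τ)ᵀ.mulVec w ∈ LinearMap.range (Matrix.mulVecLin Aᵀ) := by
  classical
  refine ⟨fun i => if h : i ∈ τ then w ⟨i, h⟩ else 0, ?_⟩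
  funext j
  rw [Matrix.mulVecLin_apply]
  simp only [Matrix.mulVec, dotProduct, Matrix.transpose_apply, rowSub, Matrix.of_apply]
  simp only [mul_dite, mul_zero]
  rw [← Finset.sum_subset (Finset.subset_univ τ)
    (fun i _ hi => by simp [hi])]
  rw [← Finset.sum_attach τ (fun i => if h : i ∈ τ then A i j * w ⟨i, h⟩ else 0)]
  apply Finset.sum_congr rfl
  intro i _
  rw [dif_pos i.2]

/-- **Lemma (Kaczmarz iterates stay in the row space).** With `e = A x_e − b` and
`x* = (I − A†A)x_0 + A†(b + e)`, any sequence of block Kaczmarz iterates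
`x_{j+1} = x_j + A_{τ_j}†(b_{τ_j} − A_{τ_j} x_j)` (for arbitrary row subsets `τ_j`)
satisfies `x_j − x* ∈ Im(Aᵀ)` for all `j`. -/
theorem kaczmarz_iterates_in_row_space {m n : ℕ}
    (A : Matrix (Fin m) (Fin n) ℝ) (b : Fin m → ℝ)
    (xe : Fin n → ℝ) (e : Fin m → ℝ) (he : e = A.mulVec xe - b)
    (x0 xstar : Fin n → ℝ)
    (hxstar : xstar = (x0 - (mpinv A).mulVec (A.mulVec x0)) + (mpinv A).mulVec (b + e))
    (τ : ℕ → Finset (Fin m))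
    (x : ℕ → Fin n → ℝ)
    (hx0 : x 0 = x0)
    (hrec : ∀ j : ℕ, x (j + 1) = kaczStep A b (τ j) (x j)) :
    ∀ j : ℕ, x j - xstar ∈ LinearMap.range (Matrix.mulVecLin Aᵀ) := by
  intro j
  induction j with
  | zero =>
    have : x 0 - xstar = (mpinv A).mulVec (A.mulVec x0) - (mpinv A).mulVec (b + e) := by
      rw [hx0, hxstar]; abel
    rw [this]
    exact sub_mem (mpinv_mulVec_mem_range A _) (mpinv_mulVec_mem_range A _)
  | succ j ih =>
    have hstep : x (j + 1) - xstar = (x j - xstar) +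
        (mpinv (rowSub A (τ j))).mulVec
          (fun i : (τ j) => b i.1 - (rowSub A (τ j)).mulVec (x j) i) := by
      rw [hrec j, kaczStep]; abel
    rw [hstep]
    refine add_mem ih ?_
    obtain ⟨w, hw⟩ := mpinv_mulVec_mem_range (rowSub A (τ j))
      (fun i : (τ j) => b i.1 - (rowSub A (τ j)).mulVec (x j) i)
    rw [Matrix.mulVecLin_apply] at hw
    rw [← hw]
    exact rowSub_transpose_range_subset A (τ j) w

end
end
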